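/- In the setting of the previous recursion, for k ≥ 1 and ζ ∈ X^+_k (ζ^k ∈ X^{++}, ζ^{k+1} = ζ^{k+2} = ⋯ = 0), one has S^{k+1}_ζ = S¹_{ζ^0+pρ}·(S¹_{ζ^1+pρ})^{(1)} ⋯ (S¹_{ζ^{k−1}+pρ})^{(k−1)} · (S¹_{ζ^k})^{(k)}. -/

import Mathlib

open Finset

/-- Base-`p` digit number `k` of a weight `ζ ∈ ℤ^I` (coordinatewise). -/
def digit (p k : ℕ) {I : Type*} (ζ : I → ℤ) : I → ℤ :=
  fun i => (ζ i / (p : ℤ) ^ k) % (p : ℤ)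

/-- The truncated tail `ζ^j + p ζ^{j+1} + p² ζ^{j+2} + ⋯` of the base-`p` expansion. -/
noncomputable def tailFrom (p j : ℕ) {I : Type*} (ζ : I → ℤ) : I → ℤ :=
  fun i => ∑ᶠ k : ℕ, (p : ℤ) ^ k * digit p (j + k) ζ i

/-- Dominant weights `X^+`. -/
def dominant {I : Type*} (ζ : I → ℤ) : Prop := ∀ i, 0 ≤ ζ i

/-- Strictly dominant weights `X^{++} = X^+ + ρ`. -/
def strictDom {I : Type*} (ζ : I → ℤ) : Prop := ∀ i, 1 ≤ ζ i

/-- `p`-restricted weights `X^+_red`. -/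
def restricted (p : ℕ) {I : Type*} (ζ : I → ℤ) : Prop :=
  ∀ i, 0 ≤ ζ i ∧ ζ i ≤ (p : ℤ) - 1

/-- The Weyl vector `ρ` (all coordinates equal to `1` in fundamental weight coordinates). -/
def rho {I : Type*} : I → ℤ := fun _ => 1

/-- The Frobenius twist `ξ ↦ ξ^{(h)}`, sending `e^λ` to `e^{p^h λ}`, as a ring
homomorphism of the group ring `ℤ[X]`, `X = ℤ^I`. -/
noncomputable def twist (p h : ℕ) {I : Type*} :
    AddMonoidAlgebra ℤ (I → ℤ) →+* AddMonoidAlgebra ℤ (I → ℤ) :=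
  AddMonoidAlgebra.mapDomainRingHom ℤ
    (AddMonoidHom.mk' (fun l => ((p : ℤ) ^ h) • l) (fun a b => smul_add _ a b))

/-- The functions `S^h` of no. 4 of the paper, defined inductively from `S¹` by
`S^h_ζ = Σ_{μ ∈ X^{++}} x_{μ, ζ^{h−1}+pζ^h+⋯} · S^{h−1}_{ζ^0+pζ^1+⋯+p^{h−2}ζ^{h−2}+p^{h−1}μ}`,
where `x_{μ,ζ}` are the coefficients of `S¹` in the basis `S⁰` (extended by zero off
`X^{++}`); by convention `S^0 := S¹`. -/
noncomputable def Sh {I : Type*} (p : ℕ) (x : (I → ℤ) → (I → ℤ) → ℤ)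
    (S1 : (I → ℤ) → AddMonoidAlgebra ℤ (I → ℤ)) :
    ℕ → (I → ℤ) → AddMonoidAlgebra ℤ (I → ℤ)
  | 0 => S1
  | 1 => S1
  | (h + 2) => fun ζ => ∑ᶠ μ : I → ℤ, x μ (tailFrom p (h + 1) ζ) •
      Sh p x S1 (h + 1)
        ((∑ j ∈ Finset.range (h + 1), (p : ℤ) ^ j • digit p j ζ) + (p : ℤ) ^ (h + 1) • μ)

/-!
By induction on `k` we prove the statement for every dominant `ζ` whose tail
`T_k = ζ^k + pζ^{k+1} + ⋯` is strictly dominant, with last factor `(S¹_{T_k})^{(k)}`; the theorem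
is the case `T_k = ζ^k`. In the recursion for `S^{k+2}_ζ` the argument
`η = (ζ mod p^{k+1}) + p^{k+1}μ` has the same digits as `ζ` below `k` and tail `T_k(η) = ζ^k + pμ`,
so the induction hypothesis and `S¹_{ζ^k+pμ} = S¹_{ζ^k+pρ} (S⁰_μ)^{(1)}` turn the `μ`-th summand
into `x_{μ,T_{k+1}} · D · (S⁰_μ)^{(k+1)}` with `D` independent of `μ`; summing over `μ` gives
`D · (S¹_{T_{k+1}})^{(k+1)}`.
-/

theorem Int.emod_pow_succ_ediv_pow {b : ℤ} (hb : 0 < b) (m : ℤ) (j : ℕ) :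
    m % b ^ (j + 1) / b ^ j = m / b ^ j % b := by
  have hbj : 0 < b ^ j := pow_pos hb j
  obtain ⟨r, hr⟩ : ∃ r, r = m % b ^ (j + 1) := ⟨_, rfl⟩
  have hm : m = r + b ^ j * (b * (m / b ^ (j + 1))) := by
    rw [← mul_assoc, ← pow_succ, hr, Int.emod_add_mul_ediv]
  have hr0 : 0 ≤ r / b ^ j := Int.ediv_nonneg (hr ▸ Int.emod_nonneg _ (pow_pos hb _).ne') hbj.le
  have hrb : r / b ^ j < b := by
    rw [Int.ediv_lt_iff_lt_mul hbj, ← pow_succ', hr]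
    exact Int.emod_lt_of_pos _ (pow_pos hb _)
  rw [← hr, hm, Int.add_mul_ediv_left _ _ hbj.ne', Int.add_mul_emod_self_left,
    Int.emod_eq_of_lt hr0 hrb]

theorem Int.sum_range_pow_mul_ediv_pow_emod {b : ℤ} (hb : 0 < b) (m : ℤ) (N : ℕ) :
    ∑ k ∈ Finset.range N, b ^ k * (m / b ^ k % b) = m % b ^ N := by
  induction N with
  | zero => simp
  | succ N ih =>
    rw [sum_range_succ, ih, ← Int.emod_pow_succ_ediv_pow hb,
      ← Int.emod_emod_of_dvd m (pow_dvd_pow b N.le_succ), Int.emod_add_mul_ediv]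

theorem Int.finsum_pow_mul_ediv_pow_emod {b : ℤ} (hb : 1 < b) {m : ℤ} (hm : 0 ≤ m) :
    ∑ᶠ k : ℕ, b ^ k * (m / b ^ k % b) = m := by
  have hlt : ∀ k, m.toNat ≤ k → m < b ^ k := fun k hk =>
    calc m = m.toNat := (Int.toNat_of_nonneg hm).symm
      _ < 2 ^ m.toNat := by exact_mod_cast Nat.lt_two_pow_self
      _ ≤ b ^ m.toNat := pow_le_pow_left₀ zero_le_two (by omega) _
      _ ≤ b ^ k := pow_le_pow_right₀ hb.le hk
  have hsupp : Function.support (fun k : ℕ => b ^ k * (m / b ^ k % b)) ⊆ Finset.range m.toNat := by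
    intro k hk
    by_contra hkN
    simp only [coe_range, Set.mem_Iio, not_lt] at hkN
    simp [Int.ediv_eq_zero_of_lt hm (hlt k hkN)] at hk
  rw [finsum_eq_sum_of_support_subset _ hsupp, Int.sum_range_pow_mul_ediv_pow_emod (by omega),
    Int.emod_eq_of_lt hm (hlt _ le_rfl)]

section Weights

variable {I : Type*}

theorem strictDom.dominant {ζ : I → ℤ} (h : strictDom ζ) : dominant ζ :=
  fun i => zero_le_one.trans (h i)

theorem restricted_digit {p : ℕ} (hp : 0 < p) (k : ℕ) (ζ : I → ℤ) :
    restricted p (digit p k ζ) := fun i =>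
  ⟨Int.emod_nonneg _ (by omega), Int.le_sub_one_of_lt (Int.emod_lt_of_pos _ (by omega))⟩

theorem tailFrom_eq_ediv {p : ℕ} (hp : 1 < p) {ζ : I → ℤ} (hζ : dominant ζ) (j : ℕ) :
    tailFrom p j ζ = fun i => ζ i / (p : ℤ) ^ j := by
  have hpj : (0 : ℤ) < (p : ℤ) ^ j := pow_pos (by omega) j
  funext i
  calc tailFrom p j ζ i = ∑ᶠ k : ℕ, (p : ℤ) ^ k * (ζ i / (p : ℤ) ^ j / (p : ℤ) ^ k % p) :=
        finsum_congr fun k => by rw [Int.ediv_ediv_of_nonneg hpj.le, ← pow_add]; rfl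
    _ = ζ i / (p : ℤ) ^ j :=
        Int.finsum_pow_mul_ediv_pow_emod (by omega) (Int.ediv_nonneg (hζ i) hpj.le)

theorem tailFrom_eq_digit_of_higher_digits_zero {p k : ℕ} {ζ : I → ℤ}
    (hzero : ∀ j, k < j → digit p j ζ = 0) :
    tailFrom p k ζ = digit p k ζ := by
  funext i
  refine (finsum_eq_single _ 0 fun m hm => ?_).trans (by simp)
  simp [hzero (k + m) (by omega)]

theorem sum_range_pow_smul_digit {p : ℕ} (hp : 0 < p) (ζ : I → ℤ) (N : ℕ) :
    ∑ j ∈ Finset.range N, (p : ℤ) ^ j • digit p j ζ = fun i => ζ i % (p : ℤ) ^ N := by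
  funext i
  simp only [Finset.sum_apply, Pi.smul_apply, smul_eq_mul]
  exact Int.sum_range_pow_mul_ediv_pow_emod (by omega) (ζ i) N

theorem digit_emod_pow_add_pow_smul {p : ℕ} (hp : 0 < p) {j k : ℕ} (hjk : j ≤ k)
    (ζ μ : I → ℤ) :
    digit p j ((fun i => ζ i % (p : ℤ) ^ (k + 1)) + (p : ℤ) ^ (k + 1) • μ) = digit p j ζ := by
  have hP : (0 : ℤ) < p := by omega
  funext i
  have hmod : ζ i % (p : ℤ) ^ (k + 1) + (p : ℤ) ^ (k + 1) * μ i ≡ ζ i [ZMOD (p : ℤ) ^ (j + 1)] :=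
    (Int.modEq_add_fac_self.trans (Int.mod_modEq _ _)).of_dvd (pow_dvd_pow _ (by omega))
  simp only [digit, Pi.add_apply, Pi.smul_apply, smul_eq_mul]
  rw [← Int.emod_pow_succ_ediv_pow hP, ← Int.emod_pow_succ_ediv_pow hP, hmod.eq]

theorem dominant_emod_pow_add_pow_smul {p : ℕ} (hp : 0 < p) (ζ : I → ℤ) {μ : I → ℤ}
    (hμ : dominant μ) (k : ℕ) :
    dominant ((fun i => ζ i % (p : ℤ) ^ (k + 1)) + (p : ℤ) ^ (k + 1) • μ) := fun i =>
  add_nonneg (Int.emod_nonneg _ (pow_pos (by omega) _).ne') (mul_nonneg (by positivity) (hμ i))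

theorem tailFrom_emod_pow_add_pow_smul {p : ℕ} (hp : 1 < p) (ζ : I → ℤ) {μ : I → ℤ}
    (hμ : dominant μ) (k : ℕ) :
    tailFrom p k ((fun i => ζ i % (p : ℤ) ^ (k + 1)) + (p : ℤ) ^ (k + 1) • μ) =
      digit p k ζ + (p : ℤ) • μ := by
  have hP : (0 : ℤ) < p := by omega
  rw [tailFrom_eq_ediv hp (dominant_emod_pow_add_pow_smul (by omega) ζ hμ k)]
  funext i
  have hsplit : (p : ℤ) ^ (k + 1) * μ i = (p : ℤ) ^ k * (p * μ i) := by ring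
  simp only [Pi.add_apply, Pi.smul_apply, smul_eq_mul]
  rw [hsplit, Int.add_mul_ediv_left _ _ (pow_pos hP k).ne', Int.emod_pow_succ_ediv_pow hP]
  rfl

theorem digit_zero_add_smul {p : ℕ} {d : I → ℤ} (hd : restricted p d) (μ : I → ℤ) :
    digit p 0 (d + (p : ℤ) • μ) = d := by
  funext i
  simp only [digit, pow_zero, Int.ediv_one, Pi.add_apply, Pi.smul_apply, smul_eq_mul,
    Int.add_mul_emod_self_left]
  exact Int.emod_eq_of_lt (hd i).1 (by linarith [(hd i).2])

theorem tailFrom_one_add_smul {p : ℕ} (hp : 1 < p) {d : I → ℤ} (hd : restricted p d)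
    {μ : I → ℤ} (hμ : dominant μ) : tailFrom p 1 (d + (p : ℤ) • μ) = μ := by
  have hdom : dominant (d + (p : ℤ) • μ) := fun i =>
    add_nonneg (hd i).1 (mul_nonneg (by positivity) (hμ i))
  rw [tailFrom_eq_ediv hp hdom]
  funext i
  simp only [Pi.add_apply, Pi.smul_apply, smul_eq_mul, pow_one]
  rw [Int.add_mul_ediv_left _ _ (by omega),
    Int.ediv_eq_zero_of_lt (hd i).1 (by linarith [(hd i).2]), zero_add]

end Weights

section Twist

variable {I : Type*}

theorem twist_zero (p : ℕ) : twist p 0 = RingHom.id (AddMonoidAlgebra ℤ (I → ℤ)) := by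
  rw [twist, ← AddMonoidAlgebra.mapDomainRingHom_id]
  congr
  ext l
  simp

theorem twist_twist (p a b : ℕ) (f : AddMonoidAlgebra ℤ (I → ℤ)) :
    twist p a (twist p b f) = twist p (a + b) f := by
  rw [twist, twist, twist, ← RingHom.comp_apply, ← AddMonoidAlgebra.mapDomainRingHom_comp]
  congr
  ext l
  simp only [AddMonoidHom.coe_comp, Function.comp_apply, AddMonoidHom.mk'_apply, smul_smul,
    pow_add]

end Twist

theorem finsum_smul_mul_map {α A B : Type*} [Ring A] [Ring B] (φ : A →+* B) {c : α → ℤ}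
    (hc : (Function.support c).Finite) (D : B) (f : α → A) :
    ∑ᶠ a, c a • (D * φ (f a)) = D * φ (∑ᶠ a, c a • f a) := by
  calc ∑ᶠ a, c a • (D * φ (f a)) = ∑ᶠ a, D * (c a • φ (f a)) :=
        finsum_congr fun a => (mul_smul_comm _ _ _).symm
    _ = D * ∑ᶠ a, c a • φ (f a) :=
        (mul_finsum' _ _ (hc.subset (Function.support_smul_subset_left c _))).symm
    _ = D * φ (∑ᶠ a, c a • f a) := by
        rw [map_finsum φ (f := fun a => c a • f a)
          (hc.subset (Function.support_smul_subset_left c f))]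
        simp only [map_zsmul]

section Factorization

variable {I : Type*} {p : ℕ} {S0 S1 : (I → ℤ) → AddMonoidAlgebra ℤ (I → ℤ)}

theorem S1_add_smul_eq_mul_twist (hp : 1 < p)
    (hfact : ∀ ζ : I → ℤ, dominant ζ → strictDom (tailFrom p 1 ζ) →
      S1 ζ = S1 (digit p 0 ζ + (p : ℤ) • rho) * twist p 1 (S0 (tailFrom p 1 ζ)))
    {d : I → ℤ} (hd : restricted p d) {μ : I → ℤ} (hμ : strictDom μ) :
    S1 (d + (p : ℤ) • μ) = S1 (d + (p : ℤ) • rho) * twist p 1 (S0 μ) := by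
  have hdom : dominant (d + (p : ℤ) • μ) := fun i =>
    add_nonneg (hd i).1 (mul_nonneg (by positivity) (hμ.dominant i))
  have htail := tailFrom_one_add_smul hp hd hμ.dominant
  rw [hfact _ hdom (by rwa [htail]), digit_zero_add_smul hd, htail]

theorem Sh_succ_eq_prod_mul_twist_tailFrom (hp : 1 < p) (x : (I → ℤ) → (I → ℤ) → ℤ)
    (hxfin : ∀ ζ : I → ℤ, (Function.support fun μ => x μ ζ).Finite)
    (hxsupp : ∀ μ ζ : I → ℤ, x μ ζ ≠ 0 → strictDom μ)
    (hx : ∀ ζ : I → ℤ, strictDom ζ → S1 ζ = ∑ᶠ μ : I → ℤ, x μ ζ • S0 μ)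
    (hfact : ∀ ζ : I → ℤ, dominant ζ → strictDom (tailFrom p 1 ζ) →
      S1 ζ = S1 (digit p 0 ζ + (p : ℤ) • rho) * twist p 1 (S0 (tailFrom p 1 ζ)))
    (k : ℕ) {ζ : I → ℤ} (hζ : dominant ζ) (htail : strictDom (tailFrom p k ζ)) :
    Sh p x S1 (k + 1) ζ =
      (∏ j ∈ Finset.range k, twist p j (S1 (digit p j ζ + (p : ℤ) • rho))) *
        twist p k (S1 (tailFrom p k ζ)) := by
  induction k generalizing ζ with
  | zero =>
    have htail0 : tailFrom p 0 ζ = ζ := by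
      rw [tailFrom_eq_ediv hp hζ]; simp
    simp [htail0, twist_zero, Sh]
  | succ k ih =>
    set D := ∏ j ∈ Finset.range (k + 1), twist p j (S1 (digit p j ζ + (p : ℤ) • rho)) with hD
    have summand : ∀ μ, strictDom μ →
        Sh p x S1 (k + 1) ((fun i => ζ i % (p : ℤ) ^ (k + 1)) + (p : ℤ) ^ (k + 1) • μ) =
          D * twist p (k + 1) (S0 μ) := by
      intro μ hμ
      have hdigits := tailFrom_emod_pow_add_pow_smul hp ζ hμ.dominant k
      have hkey : strictDom (digit p k ζ + (p : ℤ) • μ) := fun i => by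
        have := (restricted_digit (p := p) (by omega) k ζ i).1
        have := hμ i
        simp only [Pi.add_apply, Pi.smul_apply, smul_eq_mul]
        nlinarith
      rw [ih (dominant_emod_pow_add_pow_smul (by omega) ζ hμ.dominant k) (hdigits ▸ hkey),
        hdigits, S1_add_smul_eq_mul_twist hp hfact (restricted_digit (by omega) k ζ) hμ,
        map_mul, twist_twist, ← mul_assoc, hD, Finset.prod_range_succ]
      congr 2
      exact Finset.prod_congr rfl fun j hj => by
        rw [digit_emod_pow_add_pow_smul (by omega) (Finset.mem_range.mp hj).le]
    calc Sh p x S1 (k + 1 + 1) ζ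
        = ∑ᶠ μ : I → ℤ, x μ (tailFrom p (k + 1) ζ) • (D * twist p (k + 1) (S0 μ)) := by
          rw [Sh]
          dsimp only
          rw [sum_range_pow_smul_digit (by omega)]
          refine finsum_congr fun μ => ?_
          by_cases hxμ : x μ (tailFrom p (k + 1) ζ) = 0
          · simp [hxμ]
          · rw [summand μ (hxsupp μ _ hxμ)]
      _ = D * twist p (k + 1) (S1 (tailFrom p (k + 1) ζ)) := by
          rw [finsum_smul_mul_map _ (hxfin _), hx _ htail]

end Factorization

theorem Sh_top_factorization_general {I : Type*} (p : ℕ) (hp : 2 ≤ p)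
    (x : (I → ℤ) → (I → ℤ) → ℤ)
    (S0 S1 : (I → ℤ) → AddMonoidAlgebra ℤ (I → ℤ))
    (hxfin : ∀ ζ : I → ℤ, (Function.support fun μ => x μ ζ).Finite)
    (hxsupp : ∀ μ ζ : I → ℤ, x μ ζ ≠ 0 → strictDom μ)
    (hx : ∀ ζ : I → ℤ, strictDom ζ → S1 ζ = ∑ᶠ μ : I → ℤ, x μ ζ • S0 μ)
    (hfact : ∀ ζ : I → ℤ, dominant ζ → strictDom (tailFrom p 1 ζ) →
      S1 ζ = S1 (digit p 0 ζ + (p : ℤ) • rho) * twist p 1 (S0 (tailFrom p 1 ζ)))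
    (k : ℕ) (ζ : I → ℤ) (hζ : dominant ζ)
    (htop : strictDom (digit p k ζ))
    (hzero : ∀ j, k < j → digit p j ζ = 0) :
    Sh p x S1 (k + 1) ζ =
      (∏ j ∈ Finset.range k, twist p j (S1 (digit p j ζ + (p : ℤ) • rho))) *
        twist p k (S1 (digit p k ζ)) := by
  have htail := tailFrom_eq_digit_of_higher_digits_zero hzero
  rw [← htail]
  exact Sh_succ_eq_prod_mul_twist_tailFrom hp x hxfin hxsupp hx hfact k hζ (htail ▸ htop)

/-- in the setting of the previous recursion, for `k ≥ 1` and `ζ ∈ X^+_k`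
(`ζ^k ∈ X^{++}`, `ζ^j = 0` for `j > k`), one has
`S^{k+1}_ζ = S¹_{ζ^0+pρ}·(S¹_{ζ^1+pρ})^{(1)} ⋯ (S¹_{ζ^{k−1}+pρ})^{(k−1)} · (S¹_{ζ^k})^{(k)}`. -/
theorem Sh_top_factorization {I : Type*} [Fintype I] (p : ℕ) (hp : 2 ≤ p)
    (x : (I → ℤ) → (I → ℤ) → ℤ)
    (S0 S1 : (I → ℤ) → AddMonoidAlgebra ℤ (I → ℤ))
    (hS0 : LinearIndependent ℤ (fun μ : {μ : I → ℤ // strictDom μ} => S0 μ.1))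
    (hxfin : ∀ ζ : I → ℤ, (Function.support fun μ => x μ ζ).Finite)
    (hxsupp : ∀ μ ζ : I → ℤ, x μ ζ ≠ 0 → strictDom μ)
    (hx : ∀ ζ : I → ℤ, strictDom ζ → S1 ζ = ∑ᶠ μ : I → ℤ, x μ ζ • S0 μ)
    (hfact : ∀ ζ : I → ℤ, dominant ζ → strictDom (tailFrom p 1 ζ) →
      S1 ζ = S1 (digit p 0 ζ + (p : ℤ) • rho) * twist p 1 (S0 (tailFrom p 1 ζ)))
    (k : ℕ) (hk : 1 ≤ k) (ζ : I → ℤ) (hζ : dominant ζ)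
    (htop : strictDom (digit p k ζ))
    (hzero : ∀ j, k < j → digit p j ζ = 0) :
    Sh p x S1 (k + 1) ζ =
      (∏ j ∈ Finset.range k, twist p j (S1 (digit p j ζ + (p : ℤ) • rho))) *
        twist p k (S1 (digit p k ζ)) :=
  Sh_top_factorization_general p hp x S0 S1 hxfin hxsupp hx hfact k ζ hζ htop hzero
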